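/- Let a, b ∈ ℂ and consider the Mathieu-Hill operators H_t. There exist ρ ∈ (0, 1/(15π)), K > 0, and N ∈ ℕ such that for all integers n > N and all t ∈ [0, n^{−3}], every eigenvalue λ of H_t satisfying |λ − (2πn + t)²| ≤ 15πnρ satisfies |λ − (2πn)²| ≤ K·n^{−2}. -/

import Mathlib

namespace Mathieu

/-- The Mathieu potential `q(x) = a e^{-2πix} + b e^{2πix}`. -/
noncomputable def qpot (a b : ℂ) (x : ℝ) : ℂ :=
  a * Complex.exp (-(2 * Real.pi * x) * Complex.I) +
    b * Complex.exp ((2 * Real.pi * x) * Complex.I)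

/-- `y` is an eigenfunction of `H_t` (with potential (4)) for the eigenvalue `lam`:
it is twice continuously differentiable, not identically zero on `[0,1]`, solves
`-y'' + q y = λ y` on `[0,1]`, and satisfies the `t`-periodic boundary conditions (2). -/
def IsEigenfunction (a b : ℂ) (t : ℝ) (lam : ℂ) (y : ℝ → ℂ) : Prop :=
  ContDiff ℝ 2 y ∧ (∃ x ∈ Set.Icc (0 : ℝ) 1, y x ≠ 0) ∧
  (∀ x ∈ Set.Icc (0 : ℝ) 1, -(deriv (deriv y) x) + qpot a b x * y x = lam * y x) ∧
  y 1 = Complex.exp (Complex.I * t) * y 0 ∧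
  deriv y 1 = Complex.exp (Complex.I * t) * deriv y 0

/-- `lam` is an eigenvalue of the operator `H_t`. -/
def IsEigenvalue (a b : ℂ) (t : ℝ) (lam : ℂ) : Prop :=
  ∃ y : ℝ → ℂ, IsEigenfunction a b t lam y

end Mathieu

open Mathieu

/-!
Expand an eigenfunction `y` of `H_t` in the Floquet–Fourier coefficients
`c k = ∫₀¹ e^{-i(2πk+t)x} y(x) dx`. Integrating by parts twice (the boundary terms cancel by the
`t`-periodic boundary conditions) turns the equation into the three-term recurrence
`(λ - μ k) c k = a c (k+1) + b c (k-1)` with `μ k = (2πk+t)²`, and Parseval's identity shows that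
`c` is square-summable and not zero, so `‖c k‖` attains its maximum at some index `m`.

For `λ` in the disc around `(2πn+t)²` we have `‖λ - μ k‖ ≥ 24n` unless `|k| = n`, and at the maximal
index `‖λ - μ m‖ ≤ ‖a‖ + ‖b‖`; hence `|m| = n`. Eliminating `c (m ± 1)` from the recurrence
gives `λ - μ m = a b (1/(λ - μ (m+1)) + 1/(λ - μ (m-1))) + O(n⁻²)`, and the two denominators
nearly cancel: their sum is `2(λ - μ m) - 8π²`. So `λ = μ (±n) + O(n⁻²)`, and `μ (±n) = (2πn)² + O(n⁻²)` because
`t ≤ n⁻³`.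
-/

open Complex MeasureTheory Filter Topology

lemma exists_forall_le_of_tendsto_zero {ι : Type*} {f : ι → ℝ} (hf : Tendsto f cofinite (𝓝 0))
    {j : ι} (hj : 0 < f j) : ∃ m, ∀ k, f k ≤ f m := by
  have hfin : {k | f j ≤ f k}.Finite := by
    simpa [not_lt] using hf.eventually (gt_mem_nhds hj)
  obtain ⟨m, hm, hmax⟩ := Set.exists_max_image _ f hfin ⟨j, le_refl (f j)⟩
  refine ⟨m, fun k => ?_⟩
  by_cases hk : f j ≤ f k
  · exact hmax k hk
  · exact (not_le.mp hk).le.trans hm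

namespace Mathieu

section ThreeTermRecurrence

variable {c μ : ℤ → ℂ} {lam a b : ℂ}

lemma norm_sub_mul_norm_le (hrec : ∀ k, (lam - μ k) * c k = a * c (k + 1) + b * c (k - 1))
    {S : ℝ} (hS : ∀ k, ‖c k‖ ≤ S) (k : ℤ) : ‖lam - μ k‖ * ‖c k‖ ≤ (‖a‖ + ‖b‖) * S := by
  rw [← norm_mul, hrec, add_mul]
  refine (norm_add_le _ _).trans (add_le_add ?_ ?_) <;> rw [norm_mul] <;> gcongr <;> apply hS

lemma norm_sub_le_of_forall_norm_le (hrec : ∀ k, (lam - μ k) * c k = a * c (k + 1) + b * c (k - 1))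
    {m : ℤ} (hm : c m ≠ 0) (hmax : ∀ k, ‖c k‖ ≤ ‖c m‖) : ‖lam - μ m‖ ≤ ‖a‖ + ‖b‖ :=
  le_of_mul_le_mul_right (norm_sub_mul_norm_le hrec hmax m) (norm_pos_iff.mpr hm)

lemma sub_mul_eq_second_order (hrec : ∀ k, (lam - μ k) * c k = a * c (k + 1) + b * c (k - 1))
    (m : ℤ) (hP : lam - μ (m + 1) ≠ 0) (hM : lam - μ (m - 1) ≠ 0) :
    (lam - μ m) * c m =
      a * b * ((lam - μ (m + 1)) + (lam - μ (m - 1))) /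
          ((lam - μ (m + 1)) * (lam - μ (m - 1))) * c m +
        a ^ 2 / (lam - μ (m + 1)) * c (m + 2) + b ^ 2 / (lam - μ (m - 1)) * c (m - 2) := by
  have eP : (lam - μ (m + 1)) * c (m + 1) = a * c (m + 2) + b * c m := by
    rw [hrec, add_assoc, add_sub_cancel_right]; norm_num
  have eM : (lam - μ (m - 1)) * c (m - 1) = a * c m + b * c (m - 2) := by
    rw [hrec, sub_add_cancel, sub_sub]; norm_num
  field_simp
  linear_combination ((lam - μ (m + 1)) * (lam - μ (m - 1))) * hrec m +
    a * (lam - μ (m - 1)) * eP + b * (lam - μ (m + 1)) * eM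

lemma norm_sub_le_of_gap (hrec : ∀ k, (lam - μ k) * c k = a * c (k + 1) + b * c (k - 1))
    {m : ℤ} (hm : c m ≠ 0) (hmax : ∀ k, ‖c k‖ ≤ ‖c m‖) {δ : ℝ} (hδ : 0 < δ)
    (hgap : ∀ k, k ≠ m → |k - m| ≤ 2 → δ ≤ ‖lam - μ k‖) :
    ‖lam - μ m‖ ≤ (‖a‖ * ‖b‖ * ‖(lam - μ (m + 1)) + (lam - μ (m - 1))‖ +
      (‖a‖ ^ 2 + ‖b‖ ^ 2) * (‖a‖ + ‖b‖)) / δ ^ 2 := by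
  set S := ‖c m‖
  have hgap' : ∀ j : ℤ, j ≠ 0 → |j| ≤ 2 → δ ≤ ‖lam - μ (m + j)‖ := fun j hj hj2 =>
    hgap _ (by omega) (by simpa using hj2)
  have hfar : ∀ j : ℤ, j ≠ 0 → |j| ≤ 2 → ‖c (m + j)‖ ≤ (‖a‖ + ‖b‖) * S / δ := fun j hj hj2 => by
    rw [le_div_iff₀ hδ, mul_comm]
    exact (mul_le_mul_of_nonneg_right (hgap' j hj hj2) (norm_nonneg _)).trans
      (norm_sub_mul_norm_le hrec hmax _)
  set dP := lam - μ (m + 1)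
  set dM := lam - μ (m - 1)
  have hdP : δ ≤ ‖dP‖ := hgap' 1 one_ne_zero (by norm_num)
  have hdM : δ ≤ ‖dM‖ := by simpa [← sub_eq_add_neg] using hgap' (-1) (by norm_num) (by norm_num)
  have hcP : ‖c (m + 2)‖ ≤ (‖a‖ + ‖b‖) * S / δ := hfar 2 two_ne_zero (by norm_num)
  have hcM : ‖c (m - 2)‖ ≤ (‖a‖ + ‖b‖) * S / δ := by
    simpa [← sub_eq_add_neg] using hfar (-2) (by norm_num) (by norm_num)
  have key := sub_mul_eq_second_order hrec m (norm_pos_iff.mp (hδ.trans_le hdP))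
    (norm_pos_iff.mp (hδ.trans_le hdM))
  refine le_of_mul_le_mul_right ?_ (norm_pos_iff.mpr hm)
  calc ‖lam - μ m‖ * S = ‖(lam - μ m) * c m‖ := (norm_mul _ _).symm
    _ ≤ ‖a‖ * ‖b‖ * ‖dP + dM‖ / (‖dP‖ * ‖dM‖) * S + ‖a‖ ^ 2 / ‖dP‖ * ‖c (m + 2)‖ +
        ‖b‖ ^ 2 / ‖dM‖ * ‖c (m - 2)‖ := by
      rw [key]
      refine (norm_add₃_le ..).trans_eq ?_
      simp only [norm_mul, norm_div, norm_pow]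
      rfl
    _ ≤ ‖a‖ * ‖b‖ * ‖dP + dM‖ / (δ * δ) * S + ‖a‖ ^ 2 / δ * ((‖a‖ + ‖b‖) * S / δ) +
        ‖b‖ ^ 2 / δ * ((‖a‖ + ‖b‖) * S / δ) := by
      gcongr
    _ = _ := by field_simp; ring

end ThreeTermRecurrence

noncomputable def wave (μ x : ℝ) : ℂ := cexp (-(μ * x * I))

noncomputable def blochFreq (t : ℝ) (k : ℤ) : ℝ := 2 * Real.pi * k + t

noncomputable def blochCoeff (t : ℝ) (y : ℝ → ℂ) (k : ℤ) : ℂ :=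
  ∫ x in (0 : ℝ)..1, wave (blochFreq t k) x * y x

lemma hasDerivAt_wave (μ x : ℝ) : HasDerivAt (wave μ) (-(μ * I) * wave μ x) x := by
  have h := ((((hasDerivAt_id x).ofReal_comp.const_mul (μ : ℂ)).mul_const I).fun_neg).cexp
  convert h using 1
  · rfl
  · simp [wave, mul_comm]

lemma continuous_wave (μ : ℝ) : Continuous (wave μ) := by
  unfold wave; fun_prop

@[simp] lemma norm_wave (μ x : ℝ) : ‖wave μ x‖ = 1 := by
  rw [wave, norm_exp]; simp

@[simp] lemma wave_zero (μ : ℝ) : wave μ 0 = 1 := by simp [wave]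

lemma wave_blochFreq_one_mul (t : ℝ) (k : ℤ) : wave (blochFreq t k) 1 * cexp (I * t) = 1 := by
  rw [wave, ← Complex.exp_add, blochFreq]
  convert Complex.exp_int_mul_two_pi_mul_I (-k) using 2
  push_cast; ring

lemma wave_blochFreq_mul_qpot (a b : ℂ) (t x : ℝ) (k : ℤ) :
    wave (blochFreq t k) x * qpot a b x =
      a * wave (blochFreq t (k + 1)) x + b * wave (blochFreq t (k - 1)) x := by
  simp only [wave, qpot, blochFreq, mul_add, ← mul_assoc, mul_comm _ a, mul_comm _ b]
  simp only [mul_assoc, ← Complex.exp_add]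
  congr 3 <;> push_cast <;> ring

lemma continuous_qpot (a b : ℂ) : Continuous (qpot a b) := by
  unfold qpot; fun_prop

lemma blochCoeff_deriv {t : ℝ} {f : ℝ → ℂ} (hf : ContDiff ℝ 1 f)
    (hper : f 1 = cexp (I * t) * f 0) (k : ℤ) :
    blochCoeff t (deriv f) k = (blochFreq t k * I) * blochCoeff t f k := by
  set μ := blochFreq t k
  have hparts := intervalIntegral.integral_mul_deriv_eq_deriv_mul
    (fun x _ => hasDerivAt_wave μ x)
    (fun x _ => ((hf.differentiable one_ne_zero) x).hasDerivAt)
    ((continuous_const.mul (continuous_wave μ)).intervalIntegrable 0 1)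
    ((hf.continuous_deriv le_rfl).intervalIntegrable 0 1)
  have hbdry : wave μ 1 * f 1 - wave μ 0 * f 0 = 0 := by
    rw [hper, ← mul_assoc, wave_blochFreq_one_mul, wave_zero, sub_self]
  rw [blochCoeff, hparts, hbdry, zero_sub, blochCoeff, ← intervalIntegral.integral_const_mul,
    ← intervalIntegral.integral_neg]
  congr 1 with x
  ring

lemma blochCoeff_recursion {a b : ℂ} {t : ℝ} {lam : ℂ} {y : ℝ → ℂ}
    (hy : IsEigenfunction a b t lam y) (k : ℤ) :
    (lam - (blochFreq t k : ℂ) ^ 2) * blochCoeff t y k =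
      a * blochCoeff t y (k + 1) + b * blochCoeff t y (k - 1) := by
  obtain ⟨hC, -, hode, hb0, hb1⟩ := hy
  have hint : ∀ {f : ℝ → ℂ}, Continuous f → ∀ j : ℤ,
      IntervalIntegrable (fun x => wave (blochFreq t j) x * f x) volume 0 1 :=
    fun hf _ => ((continuous_wave _).mul hf).intervalIntegrable 0 1
  have hsecond :
      blochCoeff t (deriv (deriv y)) k = -(blochFreq t k : ℂ) ^ 2 * blochCoeff t y k := by
    rw [blochCoeff_deriv hC.deriv' hb1, blochCoeff_deriv (hC.of_le one_le_two) hb0]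
    linear_combination (blochFreq t k : ℂ) ^ 2 * blochCoeff t y k * I_sq
  have hpot : ∫ x in (0 : ℝ)..1, wave (blochFreq t k) x * (qpot a b x * y x) =
      a * blochCoeff t y (k + 1) + b * blochCoeff t y (k - 1) := by
    simp_rw [← mul_assoc, wave_blochFreq_mul_qpot, add_mul, mul_assoc]
    rw [intervalIntegral.integral_add ((hint hC.continuous _).const_mul a)
      ((hint hC.continuous _).const_mul b), intervalIntegral.integral_const_mul,
      intervalIntegral.integral_const_mul, blochCoeff, blochCoeff]
  have hweak : lam * blochCoeff t y k = -blochCoeff t (deriv (deriv y)) k +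
      ∫ x in (0 : ℝ)..1, wave (blochFreq t k) x * (qpot a b x * y x) := by
    have h1 : IntervalIntegrable (fun x => -(wave (blochFreq t k) x * deriv (deriv y) x))
        volume 0 1 := (hint (hC.deriv'.continuous_deriv le_rfl) k).neg
    have h2 : IntervalIntegrable (fun x => wave (blochFreq t k) x * (qpot a b x * y x))
        volume 0 1 := hint ((continuous_qpot a b).mul hC.continuous) k
    rw [blochCoeff, blochCoeff, ← intervalIntegral.integral_neg,
      ← intervalIntegral.integral_add h1 h2, ← intervalIntegral.integral_const_mul]
    refine intervalIntegral.integral_congr fun x hx => ?_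
    rw [Set.uIcc_of_le zero_le_one] at hx
    rw [mul_left_comm, ← hode x hx]; ring
  rw [hsecond, hpot] at hweak
  linear_combination hweak

lemma blochCoeff_eq_fourierCoeffOn (t : ℝ) (y : ℝ → ℂ) (k : ℤ) :
    blochCoeff t y k = fourierCoeffOn zero_lt_one (fun x => wave t x * y x) k := by
  rw [fourierCoeffOn_eq_integral, blochCoeff]
  simp only [sub_zero, div_one, one_smul, smul_eq_mul, fourier_coe_apply]
  congr 1 with x
  rw [← mul_assoc, wave, wave, blochFreq, ← Complex.exp_add]
  push_cast
  ring_nf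

lemma hasSum_sq_norm_blochCoeff (t : ℝ) {y : ℝ → ℂ} (hy : Continuous y) :
    HasSum (fun k => ‖blochCoeff t y k‖ ^ 2) (∫ x in (0 : ℝ)..1, ‖y x‖ ^ 2) := by
  obtain ⟨C, hC⟩ := isCompact_Icc.exists_bound_of_continuousOn (hy.continuousOn (s := Set.Icc 0 1))
  have hL2 : MemLp (fun x => wave t x * y x) 2 (volume.restrict (Set.Ioc 0 1)) :=
    MemLp.of_bound ((continuous_wave t).mul hy).aestronglyMeasurable C
      ((ae_restrict_mem measurableSet_Ioc).mono fun x hx => by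
        simpa using hC x (Set.Ioc_subset_Icc_self hx))
  simpa [← blochCoeff_eq_fourierCoeffOn] using hasSum_sq_fourierCoeffOn zero_lt_one hL2

lemma exists_blochCoeff_ne_zero (t : ℝ) {y : ℝ → ℂ} (hy : Continuous y)
    (hne : ∃ x ∈ Set.Icc (0 : ℝ) 1, y x ≠ 0) : ∃ k, blochCoeff t y k ≠ 0 := by
  obtain ⟨x₀, hx₀, hyx₀⟩ := hne
  by_contra! hzero
  have hint : ∫ x in (0 : ℝ)..1, ‖y x‖ ^ 2 = 0 :=
    (hasSum_sq_norm_blochCoeff t hy).unique (by simp [hzero, hasSum_zero])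
  rw [intervalIntegral.integral_eq_zero_iff_of_le_of_nonneg_ae (f := fun x => ‖y x‖ ^ 2) zero_le_one
    (ae_of_all _ fun x => by positivity) ((hy.norm.pow 2).intervalIntegrable 0 1)] at hint
  have hae : (fun x => ‖y x‖ ^ 2) =ᵐ[volume.restrict (Set.Icc 0 1)] 0 := by
    rwa [Measure.restrict_congr_set Ioc_ae_eq_Icc.symm]
  have := Measure.eqOn_Icc_of_ae_eq volume zero_ne_one hae (hy.norm.pow 2).continuousOn
    continuousOn_const hx₀
  simp_all

lemma exists_forall_norm_blochCoeff_le (t : ℝ) {y : ℝ → ℂ} (hy : Continuous y)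
    (hne : ∃ x ∈ Set.Icc (0 : ℝ) 1, y x ≠ 0) :
    ∃ m, blochCoeff t y m ≠ 0 ∧ ∀ k, ‖blochCoeff t y k‖ ≤ ‖blochCoeff t y m‖ := by
  obtain ⟨j, hj⟩ := exists_blochCoeff_ne_zero t hy hne
  obtain ⟨m, hm⟩ := exists_forall_le_of_tendsto_zero
    (hasSum_sq_norm_blochCoeff t hy).summable.tendsto_cofinite_zero (j := j) (by positivity)
  refine ⟨m, fun h => ?_, fun k => ?_⟩
  · have := hm j
    simp only [h, norm_zero] at this
    exact (pow_pos (norm_pos_iff.mpr hj) 2).not_ge (by simpa using this)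
  · exact (pow_le_pow_iff_left₀ (norm_nonneg _) (norm_nonneg _) two_ne_zero).mp (hm k)

lemma five_mul_abs_le_abs_blochFreq {t : ℝ} (ht₀ : 0 ≤ t) (ht₁ : t ≤ 1) (j : ℤ) :
    5 * |(j : ℝ)| ≤ |blochFreq t j| := by
  rcases eq_or_ne j 0 with rfl | hj
  · simp
  have hpi := Real.pi_gt_three
  have h1 : (1 : ℝ) ≤ |(j : ℝ)| := by exact_mod_cast Int.one_le_abs hj
  calc 5 * |(j : ℝ)| ≤ 2 * Real.pi * |(j : ℝ)| - 1 := by nlinarith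
    _ ≤ |2 * Real.pi * j| - |t| := by
        rw [abs_mul, abs_of_pos (by positivity : 0 < 2 * Real.pi), abs_of_nonneg ht₀]; linarith
    _ ≤ |blochFreq t j| := by rw [blochFreq]; exact abs_sub_abs_le_abs_add _ _

lemma blochFreq_sq_sub_sq (t : ℝ) (k n : ℤ) :
    blochFreq t k ^ 2 - (2 * Real.pi * n) ^ 2 = blochFreq t (k - n) * blochFreq t (k + n) := by
  simp only [blochFreq]; push_cast; ring

lemma le_abs_sub_mul_abs_add {k n : ℤ} (hn : 0 ≤ n) (hk : |k| ≠ n) : n ≤ |k - n| * |k + n| := by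
  have : 1 ≤ |k - n| ∧ 1 ≤ |k + n| ∧ (n ≤ |k - n| ∨ n ≤ |k + n|) := by
    rcases abs_cases k with ⟨_, _⟩ | ⟨_, _⟩ <;> rcases abs_cases (k - n) with ⟨_, _⟩ | ⟨_, _⟩ <;>
      rcases abs_cases (k + n) with ⟨_, _⟩ | ⟨_, _⟩ <;> omega
  obtain ⟨h₁, h₂, h | h⟩ := this <;> nlinarith

lemma le_abs_blochFreq_sq_sub_sq {t : ℝ} (ht₀ : 0 ≤ t) (ht₁ : t ≤ 1) {n : ℕ} {k : ℤ}
    (hk : |k| ≠ n) : 25 * (n : ℝ) ≤ |blochFreq t k ^ 2 - (2 * Real.pi * n) ^ 2| := by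
  have hprod : ((n : ℤ) : ℝ) ≤ |((k - n : ℤ) : ℝ)| * |((k + n : ℤ) : ℝ)| := by
    simpa only [← Int.cast_abs, ← Int.cast_mul, Int.cast_le] using
      le_abs_sub_mul_abs_add (Int.natCast_nonneg n) hk
  have hfac := blochFreq_sq_sub_sq t k n
  push_cast at hfac hprod
  rw [hfac, abs_mul]
  calc 25 * (n : ℝ) ≤ (5 * |(k : ℝ) - n|) * (5 * |(k : ℝ) + n|) := by nlinarith
    _ ≤ _ := by
      gcongr <;> exact_mod_cast five_mul_abs_le_abs_blochFreq ht₀ ht₁ _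

lemma abs_blochFreq_sq_sub_sq_le {t : ℝ} (ht₀ : 0 ≤ t) {n : ℕ} (hn : 1 ≤ n)
    (ht : t ≤ ((n : ℝ) ^ 3)⁻¹) {k : ℤ} (hk : |k| = n) :
    |blochFreq t k ^ 2 - (2 * Real.pi * n) ^ 2| ≤ 14 * ((n : ℝ) ^ 2)⁻¹ := by
  have hn' : (1 : ℝ) ≤ n := by exact_mod_cast hn
  have hkR : |(k : ℝ)| = n := by exact_mod_cast hk
  have hnt : n * t ≤ ((n : ℝ) ^ 2)⁻¹ := by
    calc n * t ≤ n * ((n : ℝ) ^ 3)⁻¹ := by gcongr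
      _ = ((n : ℝ) ^ 2)⁻¹ := by field_simp
  have htt : t ^ 2 ≤ ((n : ℝ) ^ 2)⁻¹ := by
    have ht₁ : t ≤ 1 := ht.trans (inv_le_one_of_one_le₀ (one_le_pow₀ hn'))
    nlinarith
  have hexpand : blochFreq t k ^ 2 - (2 * Real.pi * n) ^ 2 = 4 * Real.pi * k * t + t ^ 2 := by
    have hsq : (k : ℝ) ^ 2 = (n : ℝ) ^ 2 := by rw [← sq_abs (k : ℝ), hkR]
    rw [blochFreq]; linear_combination (4 * Real.pi ^ 2) * hsq
  have hpi := Real.pi_lt_d2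
  calc |blochFreq t k ^ 2 - (2 * Real.pi * n) ^ 2| ≤ 4 * Real.pi * (n * t) + t ^ 2 := by
        rw [hexpand]
        refine (abs_add_le _ _).trans_eq ?_
        rw [abs_mul, abs_mul, hkR, abs_of_nonneg ht₀, abs_sq, abs_of_pos (by positivity)]; ring
    _ ≤ 4 * Real.pi * ((n : ℝ) ^ 2)⁻¹ + ((n : ℝ) ^ 2)⁻¹ := by gcongr
    _ ≤ 14 * ((n : ℝ) ^ 2)⁻¹ := by nlinarith [inv_pos.mpr (by positivity : (0 : ℝ) < n ^ 2)]

lemma norm_ofReal_sub_ofReal (r s : ℝ) : ‖(r : ℂ) - s‖ = |r - s| := by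
  rw [← ofReal_sub, norm_real, Real.norm_eq_abs]

lemma exists_norm_sub_blochFreq_sq_le {a b : ℂ} {t : ℝ} {lam : ℂ} {y : ℝ → ℂ}
    (hy : IsEigenfunction a b t lam y) {n : ℕ} (hn : 2 ≤ n) (hab : ‖a‖ + ‖b‖ < 24 * n)
    (hab' : ‖a‖ * ‖b‖ ≤ (n : ℝ) ^ 2)
    (hgap : ∀ k : ℤ, |k| ≠ n → 24 * (n : ℝ) ≤ ‖lam - (blochFreq t k : ℂ) ^ 2‖) :
    ∃ m : ℤ, |m| = n ∧ ‖lam - (blochFreq t m : ℂ) ^ 2‖ ≤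
      (‖a‖ * ‖b‖ + (‖a‖ ^ 2 + ‖b‖ ^ 2) * (‖a‖ + ‖b‖)) * ((n : ℝ) ^ 2)⁻¹ := by
  have hrec := blochCoeff_recursion hy
  obtain ⟨m, hm, hmax⟩ := exists_forall_norm_blochCoeff_le t hy.1.continuous hy.2.1
  have hres : |m| = n := by
    by_contra h
    linarith [hgap m h, norm_sub_le_of_forall_norm_le hrec hm hmax]
  refine ⟨m, hres, ?_⟩
  have hbound := norm_sub_le_of_gap hrec hm hmax (δ := 24 * n) (by positivity)
    fun k hk hk2 => hgap k (by
      rcases abs_cases k with ⟨_, _⟩ | ⟨_, _⟩ <;> rcases abs_cases m with ⟨_, _⟩ | ⟨_, _⟩ <;>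
        rcases abs_cases (k - m) with ⟨_, _⟩ | ⟨_, _⟩ <;> omega)
  have hsum : (lam - (blochFreq t (m + 1) : ℂ) ^ 2) + (lam - (blochFreq t (m - 1) : ℂ) ^ 2) =
      2 * (lam - (blochFreq t m : ℂ) ^ 2) - 8 * Real.pi ^ 2 := by
    simp only [blochFreq]; push_cast; ring
  have hσ : ‖2 * (lam - (blochFreq t m : ℂ) ^ 2) - 8 * Real.pi ^ 2‖ ≤
      2 * ‖lam - (blochFreq t m : ℂ) ^ 2‖ + 80 := by
    refine (norm_sub_le _ _).trans ?_
    have hpi := Real.pi_lt_d2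
    simp only [norm_mul, norm_pow, norm_real, Real.norm_of_nonneg Real.pi_pos.le,
      Complex.norm_ofNat]
    nlinarith [Real.pi_pos]
  rw [hsum, le_div_iff₀ (by positivity)] at hbound
  rw [← div_eq_mul_inv, le_div_iff₀ (by positivity)]
  have hX := norm_nonneg (lam - (blochFreq t m : ℂ) ^ 2)
  have hAB := mul_nonneg (norm_nonneg a) (norm_nonneg b)
  nlinarith [mul_le_mul_of_nonneg_left hσ hAB, mul_le_mul_of_nonneg_left hab' hX,
    mul_nonneg (add_nonneg (sq_nonneg ‖a‖) (sq_nonneg ‖b‖))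
      (add_nonneg (norm_nonneg a) (norm_nonneg b))]

lemma le_norm_sub_blochFreq_sq {t : ℝ} (ht₀ : 0 ≤ t) {n : ℕ} (hn : 4 ≤ n)
    (ht : t ≤ ((n : ℝ) ^ 3)⁻¹) {lam : ℂ}
    (hlam : ‖lam - (((2 * Real.pi * n + t) ^ 2 : ℝ) : ℂ)‖ ≤ n / 2) {k : ℤ} (hk : |k| ≠ n) :
    24 * (n : ℝ) ≤ ‖lam - (blochFreq t k : ℂ) ^ 2‖ := by
  have hn₄ : (4 : ℝ) ≤ n := by exact_mod_cast hn
  have ht₁ : t ≤ 1 := ht.trans (inv_le_one_of_one_le₀ (one_le_pow₀ (by linarith)))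
  have hclose := abs_blochFreq_sq_sub_sq_le ht₀ (by omega) ht (abs_of_nonneg (Int.natCast_nonneg n))
  have hinv : ((n : ℝ) ^ 2)⁻¹ ≤ 16⁻¹ := inv_anti₀ (by norm_num) (by nlinarith)
  have hcentre : ‖lam - (((2 * Real.pi * n) ^ 2 : ℝ) : ℂ)‖ ≤ n := by
    refine (norm_sub_le_norm_sub_add_norm_sub _ (((2 * Real.pi * n + t) ^ 2 : ℝ) : ℂ) _).trans ?_
    rw [norm_ofReal_sub_ofReal]
    simp only [blochFreq, Int.cast_natCast] at hclose
    linarith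
  have hfar := norm_sub_le_norm_sub_add_norm_sub (((blochFreq t k ^ 2 : ℝ)) : ℂ) lam
    (((2 * Real.pi * n) ^ 2 : ℝ) : ℂ)
  rw [norm_ofReal_sub_ofReal, norm_sub_rev] at hfar
  push_cast at hfar hcentre ⊢
  linarith [le_abs_blochFreq_sq_sub_sq ht₀ ht₁ hk]

end Mathieu

/-- Formula (58): uniformly for `t ∈ [0, n⁻³]`, the eigenvalues of `H_t` lying in
the disk `U(n,t,ρ)` satisfy `λ = (2πn)² + O(n⁻²)`. -/
theorem stmt13 (a b : ℂ) :
    ∃ ρ : ℝ, 0 < ρ ∧ ρ < 1 / (15 * Real.pi) ∧ ∃ K : ℝ, 0 < K ∧ ∃ N : ℕ, ∀ n : ℕ, N < n →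
      ∀ t : ℝ, t ∈ Set.Icc (0 : ℝ) (((n : ℝ) ^ 3)⁻¹) →
      ∀ lam : ℂ, IsEigenvalue a b t lam →
        ‖lam - (((2 * Real.pi * (n : ℝ) + t) ^ 2 : ℝ) : ℂ)‖ ≤ 15 * Real.pi * (n : ℝ) * ρ →
        ‖lam - (((2 * Real.pi * (n : ℝ)) ^ 2 : ℝ) : ℂ)‖ ≤ K * ((n : ℝ) ^ 2)⁻¹ := by
  set C := ‖a‖ * ‖b‖ + (‖a‖ ^ 2 + ‖b‖ ^ 2) * (‖a‖ + ‖b‖)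
  refine ⟨1 / (30 * Real.pi), by positivity, by gcongr; linarith [Real.pi_pos], C + 14,
    by positivity, ⌈‖a‖ + ‖b‖ + ‖a‖ * ‖b‖⌉₊ + 3, fun n hn t ⟨ht₀, ht⟩ lam ⟨y, hy⟩ hdisc => ?_⟩
  have hnN : ‖a‖ + ‖b‖ + ‖a‖ * ‖b‖ + 4 ≤ n := by
    have : ((⌈‖a‖ + ‖b‖ + ‖a‖ * ‖b‖⌉₊ + 4 : ℕ) : ℝ) ≤ n := by exact_mod_cast hn
    push_cast at this
    linarith [Nat.le_ceil (‖a‖ + ‖b‖ + ‖a‖ * ‖b‖)]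
  have hrad : 15 * Real.pi * n * (1 / (30 * Real.pi)) = n / 2 := by field_simp; ring
  obtain ⟨m, hm, hX⟩ := exists_norm_sub_blochFreq_sq_le hy (n := n) (by omega)
    (by linarith [mul_nonneg (norm_nonneg a) (norm_nonneg b)])
    (by nlinarith [norm_nonneg a, norm_nonneg b])
    fun k hk => le_norm_sub_blochFreq_sq ht₀ (by omega) ht (hrad ▸ hdisc) hk
  calc _ ≤ _ := norm_sub_le_norm_sub_add_norm_sub _ (((blochFreq t m ^ 2 : ℝ)) : ℂ) _
    _ ≤ C * ((n : ℝ) ^ 2)⁻¹ + 14 * ((n : ℝ) ^ 2)⁻¹ := by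
      rw [norm_ofReal_sub_ofReal]
      push_cast
      exact add_le_add hX (abs_blochFreq_sq_sub_sq_le ht₀ (by omega) ht hm)
    _ = (C + 14) * ((n : ℝ) ^ 2)⁻¹ := by ring
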